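/- Forward Euler stability (Theorem 3.4(3)): For R(z) = 1 + z, the Galerkin forward Euler–Maruyama scheme is asymptotically mean-square stable if ( max{|1 − Δt λ_{h,1}|, |1 − Δt λ_{h,N_h}|} + Δt ‖F‖_{L(H)} )² + Δt Tr(Q) ‖G‖²_{L(H;L(U;H))} < 1. -/

import Mathlib

/-! The drift `D = diag (1 - Δt λ_k) + Δt Fm` has operator norm at most
`c = max (|1 - Δt λ_1|, |1 - Δt λ_N|) + Δt ‖F‖`, since `1 - Δt λ_k` lies between its values at
the extreme eigenvalues. In `X^{j+1} = D X^j + E^j X^j` the cross term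
`𝔼 ⟪D X^j, E^j X^j⟫` vanishes, because the noise `E^j` is conditionally centred given `ℱ_j` while
`X^j` is `ℱ_j`-measurable; for the same reason `𝔼 ‖E^j X^j‖² = 𝔼 ⟪X^j, K X^j⟫`, where the
conditional covariance `K` of `E^j` is a constant matrix whose quadratic form is at most
`Δt Tr(Q) ‖G‖² ‖·‖²`. Hence `𝔼 ‖X^{j+1}‖² ≤ (c² + Δt Tr(Q) ‖G‖²) 𝔼 ‖X^j‖²`, a contraction by
hypothesis. -/

open MeasureTheory Filter
open scoped Kronecker RealInnerProductSpace

noncomputable section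

/-- A solution process of the linear recursion `X^{j+1} = (D + E^j) X^j` with
`F_0`-measurable square-integrable initial value (all iterates square-integrable, so that
all tensor expectations exist). -/
def IsSolution {Ω : Type*} {m0 : MeasurableSpace Ω} (μ : MeasureTheory.Measure Ω)
    (ℱ : MeasureTheory.Filtration ℕ m0) {N : ℕ}
    (D : Matrix (Fin N) (Fin N) ℝ) (E : ℕ → Ω → Matrix (Fin N) (Fin N) ℝ)
    (X : ℕ → Ω → Fin N → ℝ) : Prop :=
  (∀ j ω, X (j + 1) ω = (D + E j ω).mulVec (X j ω))
    ∧ (∀ k, StronglyMeasurable[ℱ 0] fun ω => X 0 ω k)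
    ∧ (∀ j k, MeasureTheory.MemLp (fun ω => X j ω k) 2 μ)

/-- The mean-square (second moment) `E[‖X^j‖²]` of a solution process. -/
noncomputable def secondMoment {Ω : Type*} {m0 : MeasurableSpace Ω}
    (μ : MeasureTheory.Measure Ω) {N : ℕ} (X : ℕ → Ω → Fin N → ℝ) (j : ℕ) : ℝ :=
  ∫ ω, ∑ k, (X j ω k) ^ 2 ∂μ

/-- Mean-square stability of the zero solution of the recursion `X^{j+1} = (D + E^j)X^j`. -/
def MeanSquareStable {Ω : Type*} {m0 : MeasurableSpace Ω} (μ : MeasureTheory.Measure Ω)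
    (ℱ : MeasureTheory.Filtration ℕ m0) {N : ℕ}
    (D : Matrix (Fin N) (Fin N) ℝ) (E : ℕ → Ω → Matrix (Fin N) (Fin N) ℝ) : Prop :=
  ∀ ε > (0 : ℝ), ∃ δ > (0 : ℝ), ∀ X : ℕ → Ω → Fin N → ℝ,
    IsSolution μ ℱ D E X → secondMoment μ X 0 < δ → ∀ j, secondMoment μ X j < ε

/-- Asymptotic mean-square stability of the zero solution: mean-square stability together with
the existence of `δ > 0` such that `E[‖X^0‖²] < δ` implies `E[‖X^j‖²] → 0`. -/
def AsympMeanSquareStable {Ω : Type*} {m0 : MeasurableSpace Ω} (μ : MeasureTheory.Measure Ω)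
    (ℱ : MeasureTheory.Filtration ℕ m0) {N : ℕ}
    (D : Matrix (Fin N) (Fin N) ℝ) (E : ℕ → Ω → Matrix (Fin N) (Fin N) ℝ) : Prop :=
  MeanSquareStable μ ℱ D E ∧
    ∃ δ > (0 : ℝ), ∀ X : ℕ → Ω → Fin N → ℝ,
      IsSolution μ ℱ D E X → secondMoment μ X 0 < δ →
        Filter.Tendsto (secondMoment μ X) Filter.atTop (nhds 0)

open Matrix

section MatrixNorm

variable {n : Type*} [Fintype n] [DecidableEq n]

lemma mulVec_dotProduct_mulVec_le {M : Matrix n n ℝ} {C : ℝ}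
    (hM : ‖toEuclideanCLM (𝕜 := ℝ) M‖ ≤ C) (x : n → ℝ) :
    M *ᵥ x ⬝ᵥ M *ᵥ x ≤ C ^ 2 * (x ⬝ᵥ x) := by
  have hx : x ⬝ᵥ x = ‖WithLp.toLp 2 x‖ ^ 2 := by
    rw [EuclideanSpace.real_norm_sq_eq]; simp [dotProduct, sq]
  have hMx : M *ᵥ x ⬝ᵥ M *ᵥ x = ‖toEuclideanCLM (𝕜 := ℝ) M (WithLp.toLp 2 x)‖ ^ 2 := by
    rw [EuclideanSpace.real_norm_sq_eq]; simp [dotProduct, sq]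
  rw [hMx, hx, ← mul_pow]
  gcongr
  exact (ContinuousLinearMap.le_opNorm _ _).trans (by gcongr)

lemma abs_apply_le_norm_toEuclideanCLM (M : Matrix n n ℝ) (a b : n) :
    |M a b| ≤ ‖toEuclideanCLM (𝕜 := ℝ) M‖ := by
  have hunit : ∀ i : n, ‖WithLp.toLp 2 (Pi.single i 1 : n → ℝ)‖ = 1 := by
    intro i; simp
  have hentry : M a b = ⟪WithLp.toLp 2 (Pi.single a 1 : n → ℝ),
      toEuclideanCLM (𝕜 := ℝ) M (WithLp.toLp 2 (Pi.single b 1 : n → ℝ))⟫ := by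
    rw [inner_toEuclideanCLM]; simp
  rw [hentry]
  refine (abs_real_inner_le_norm _ _).trans ?_
  simpa [hunit] using (toEuclideanCLM (𝕜 := ℝ) M).le_opNorm (WithLp.toLp 2 (Pi.single b 1 : n → ℝ))

lemma norm_toEuclideanCLM_diagonal_le {d : n → ℝ} {C : ℝ} (hC : 0 ≤ C) (hd : ∀ k, |d k| ≤ C) :
    ‖toEuclideanCLM (𝕜 := ℝ) (diagonal d)‖ ≤ C := by
  open scoped Matrix.Norms.L2Operator in
  rw [l2_opNorm_toEuclideanCLM, l2_opNorm_diagonal]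
  exact (pi_norm_le_iff_of_nonneg hC).mpr hd

lemma dotProduct_mulVec_tsum_gram_le {A : ℕ → Matrix n n ℝ} {c : ℕ → ℝ} (hc : ∀ k, 0 ≤ c k)
    (hsum : Summable c) {g : ℝ} (hA : ∀ k, ‖toEuclideanCLM (𝕜 := ℝ) (A k)‖ ≤ g) (y : n → ℝ) :
    y ⬝ᵥ (of fun b b' => ∑ a, ∑' k, c k * (A k a b * A k a b')) *ᵥ y
      ≤ (∑' k, c k) * g ^ 2 * (y ⬝ᵥ y) := by
  have hentry : ∀ a b b', HasSum (fun k => c k * (A k a b * A k a b'))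
      (∑' k, c k * (A k a b * A k a b')) := by
    intro a b b'
    refine (Summable.of_norm_bounded (hsum.mul_right (g ^ 2)) fun k => ?_).hasSum
    have hbound : ∀ i j, |A k i j| ≤ g := fun i j =>
      (abs_apply_le_norm_toEuclideanCLM _ i j).trans (hA k)
    rw [norm_mul, norm_mul, Real.norm_of_nonneg (hc k), sq, Real.norm_eq_abs, Real.norm_eq_abs]
    exact mul_le_mul_of_nonneg_left (mul_le_mul (hbound a b) (hbound a b') (abs_nonneg _)
      ((abs_nonneg _).trans (hbound a b))) (hc k)
  have hquad : HasSum (fun k => c k * (A k *ᵥ y ⬝ᵥ A k *ᵥ y))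
      (y ⬝ᵥ (of fun b b' => ∑ a, ∑' k, c k * (A k a b * A k a b')) *ᵥ y) := by
    refine (hasSum_sum fun b _ => (hasSum_sum fun b' _ =>
      (hasSum_sum fun a _ => hentry a b b').mul_right (y b')).mul_left (y b)).congr_fun fun k => ?_
    simp only [dotProduct, mulVec, Finset.mul_sum, Finset.sum_mul]
    rw [Finset.sum_comm]
    refine Finset.sum_congr rfl fun b _ => ?_
    rw [Finset.sum_comm]
    refine Finset.sum_congr rfl fun b' _ => Finset.sum_congr rfl fun a _ => ?_
    ring
  refine hasSum_le (fun k => ?_) hquad (hsum.hasSum.mul_right (g ^ 2 * (y ⬝ᵥ y)))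
    |>.trans_eq (by ring)
  exact mul_le_mul_of_nonneg_left (mulVec_dotProduct_mulVec_le (hA k) y) (hc k)

end MatrixNorm

lemma norm_toEuclideanCLM_forwardEuler_le {N : ℕ} {Δt nF : ℝ} (hΔt : 0 ≤ Δt)
    {lam : Fin (N + 1) → ℝ} (hlam : Monotone lam) {Fm : Matrix (Fin (N + 1)) (Fin (N + 1)) ℝ}
    (hFm : ‖toEuclideanCLM (𝕜 := ℝ) Fm‖ ≤ nF) :
    ‖toEuclideanCLM (𝕜 := ℝ) (diagonal (fun k => 1 - Δt * lam k) + Δt • Fm)‖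
      ≤ max |1 - Δt * lam 0| |1 - Δt * lam (Fin.last N)| + Δt * nF := by
  rw [map_add, map_smul]
  refine (norm_add_le _ _).trans (add_le_add ?_ ?_)
  · refine norm_toEuclideanCLM_diagonal_le ((abs_nonneg _).trans (le_max_left _ _)) fun k => ?_
    rw [max_comm]
    exact abs_le_max_abs_abs (by gcongr; exact hlam (Fin.le_last k))
      (by gcongr; exact hlam (Fin.zero_le k))
  · refine (norm_smul_le Δt (toEuclideanCLM (𝕜 := ℝ) Fm)).trans ?_
    rw [Real.norm_of_nonneg hΔt]
    gcongr

section Freezing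

variable {Ω : Type*} {m m0 : MeasurableSpace Ω} {μ : Measure Ω}

lemma setIntegral_mul_eq_of_condExp_eq_const [IsFiniteMeasure μ] (hm : m ≤ m0) {s : Set Ω}
    (hs : MeasurableSet[m] s) {φ W : Ω → ℝ} {C k : ℝ} (hφ : StronglyMeasurable[m] φ)
    (hφC : ∀ ω ∈ s, |φ ω| ≤ C) (hW : Integrable W μ) (hWk : μ[W | m] =ᵐ[μ] fun _ => k) :
    ∫ ω in s, φ ω * W ω ∂μ = k * ∫ ω in s, φ ω ∂μ := by
  have hbound : ∀ ω, ‖s.indicator φ ω‖ ≤ max C 0 := by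
    intro ω
    by_cases hω : ω ∈ s
    · rw [Set.indicator_of_mem hω, Real.norm_eq_abs]
      exact le_max_of_le_left (hφC ω hω)
    · simp [hω]
  have hpull : μ[s.indicator φ * W | m] =ᵐ[μ] fun ω => s.indicator φ ω * k := by
    refine (condExp_stronglyMeasurable_mul_of_bound hm (hφ.indicator hs) hW _
      (ae_of_all _ hbound)).trans ?_
    filter_upwards [hWk] with ω hω
    simp [hω]
  calc ∫ ω in s, φ ω * W ω ∂μ = ∫ ω, (s.indicator φ * W) ω ∂μ := by
        simp_rw [Pi.mul_apply, ← Set.indicator_mul_left, integral_indicator (hm s hs)]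
    _ = ∫ ω, (μ[s.indicator φ * W | m]) ω ∂μ := (integral_condExp hm).symm
    _ = ∫ ω, s.indicator φ ω * k ∂μ := integral_congr_ae hpull
    _ = k * ∫ ω in s, φ ω ∂μ := by rw [integral_mul_const, integral_indicator (hm s hs), mul_comm]

lemma integral_eq_of_setIntegral_eq_of_monotone {F H : Ω → ℝ} (hF : Integrable F μ)
    (hH : Integrable H μ) {S : ℕ → Set Ω} (hS : ∀ M, MeasurableSet (S M)) (hmono : Monotone S)
    (hcover : ⋃ M, S M = Set.univ) (h : ∀ M, ∫ ω in S M, F ω ∂μ = ∫ ω in S M, H ω ∂μ) :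
    ∫ ω, F ω ∂μ = ∫ ω, H ω ∂μ := by
  have hlim : ∀ {F : Ω → ℝ}, Integrable F μ →
      Tendsto (fun M => ∫ ω in S M, F ω ∂μ) atTop (nhds (∫ ω, F ω ∂μ)) := fun hF => by
    simpa [hcover] using tendsto_setIntegral_of_monotone hS hmono (hF.integrableOn (s := ⋃ M, S M))
  exact tendsto_nhds_unique (hlim hF) ((hlim hH).congr fun M => (h M).symm)

variable {n : Type*} [Fintype n]

lemma dotProduct_mulVec_eq_sum (x : n → ℝ) (A : Matrix n n ℝ) :
    x ⬝ᵥ A *ᵥ x = ∑ p : n × n, x p.1 * x p.2 * A p.1 p.2 := by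
  simp only [dotProduct, mulVec, Fintype.sum_prod_type, Finset.mul_sum]
  exact Finset.sum_congr rfl fun b _ => Finset.sum_congr rfl fun b' _ => by ring

lemma integral_dotProduct_mulVec_eq_of_condExp_eq_const [IsFiniteMeasure μ] (hm : m ≤ m0)
    {A : Ω → Matrix n n ℝ} {K : Matrix n n ℝ} (hA : ∀ b b', Integrable (fun ω => A ω b b') μ)
    (hAK : ∀ b b', μ[fun ω => A ω b b' | m] =ᵐ[μ] fun _ => K b b')
    {x : Ω → n → ℝ} (hx : ∀ b, StronglyMeasurable[m] fun ω => x ω b)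
    (hx2 : ∀ b, MemLp (fun ω => x ω b) 2 μ) (hint : Integrable (fun ω => x ω ⬝ᵥ A ω *ᵥ x ω) μ) :
    ∫ ω, x ω ⬝ᵥ A ω *ᵥ x ω ∂μ = ∫ ω, x ω ⬝ᵥ K *ᵥ x ω ∂μ := by
  have hxx : ∀ p : n × n, Integrable (fun ω => x ω p.1 * x ω p.2) μ :=
    fun p => (hx2 p.1).integrable_mul (hx2 p.2)
  -- truncate to where `x` is bounded by `M`, so that `x` may be pulled out of `μ[· | m]`
  set S : ℕ → Set Ω := fun M => {ω | ∀ b, ‖x ω b‖ ≤ M}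
  have hSm : ∀ M, MeasurableSet[m] (S M) := fun M => by
    simp only [S, Set.ofPred_forall]
    exact MeasurableSet.iInter fun b => (hx b).norm.measurable measurableSet_Iic
  have hbound : ∀ M, ∀ p : n × n, ∀ ω ∈ S M, |x ω p.1 * x ω p.2| ≤ M * M := by
    intro M p ω hω
    rw [← Real.norm_eq_abs, norm_mul]
    exact mul_le_mul (hω p.1) (hω p.2) (norm_nonneg _) ((norm_nonneg _).trans (hω p.1))
  have hcover : ⋃ M, S M = Set.univ := Set.eq_univ_of_forall fun ω => by
    obtain ⟨M, hM⟩ := exists_nat_ge ‖x ω‖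
    exact Set.mem_iUnion.mpr ⟨M, fun b => (norm_le_pi_norm (x ω) b).trans hM⟩
  have hKint : Integrable (fun ω => x ω ⬝ᵥ K *ᵥ x ω) μ := by
    simp_rw [dotProduct_mulVec_eq_sum]
    exact integrable_finsetSum _ fun p _ => (hxx p).mul_const _
  refine integral_eq_of_setIntegral_eq_of_monotone hint hKint (fun M => hm _ (hSm M))
    (fun M M' hMM' ω hω b => (hω b).trans (Nat.cast_le.mpr hMM')) hcover fun M => ?_
  have hterm : ∀ p : n × n, IntegrableOn (fun ω => x ω p.1 * x ω p.2 * A ω p.1 p.2) (S M) μ :=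
    fun p => (hA p.1 p.2).integrableOn.bdd_mul
      ((hx p.1).mul (hx p.2) |>.mono hm).aestronglyMeasurable.restrict
      (ae_restrict_of_forall_mem (hm _ (hSm M)) fun ω hω => (hbound M p ω hω))
  simp_rw [dotProduct_mulVec_eq_sum]
  rw [integral_finsetSum _ fun p _ => hterm p,
    integral_finsetSum _ fun p _ => ((hxx p).mul_const _).integrableOn]
  refine Finset.sum_congr rfl fun p _ => ?_
  rw [setIntegral_mul_eq_of_condExp_eq_const (φ := fun ω => x ω p.1 * x ω p.2) hm (hSm M)
    ((hx p.1).mul (hx p.2)) (hbound M p)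
    (hA p.1 p.2) (hAK p.1 p.2), integral_mul_const, mul_comm]

lemma integrable_dotProduct_of_memLp {f g : Ω → n → ℝ} (hf : ∀ a, MemLp (fun ω => f ω a) 2 μ)
    (hg : ∀ a, MemLp (fun ω => g ω a) 2 μ) : Integrable (fun ω => f ω ⬝ᵥ g ω) μ :=
  integrable_finsetSum _ fun a _ => (hf a).integrable_mul (hg a)

lemma memLp_mulVec (D : Matrix n n ℝ) {x : Ω → n → ℝ} (hx : ∀ b, MemLp (fun ω => x ω b) 2 μ)
    (a : n) : MemLp (fun ω => (D *ᵥ x ω) a) 2 μ :=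
  memLp_finsetSum _ fun b _ => (hx b).const_mul (D a b)

lemma condExp_finsetSum_eq_const {ι : Type*} {s : Finset ι} {f : ι → Ω → ℝ} {k : ι → ℝ}
    (hf : ∀ i ∈ s, Integrable (f i) μ) (hk : ∀ i ∈ s, μ[f i | m] =ᵐ[μ] fun _ => k i) :
    μ[fun ω => ∑ i ∈ s, f i ω | m] =ᵐ[μ] fun _ => ∑ i ∈ s, k i := by
  rw [← Finset.sum_fn]
  filter_upwards [condExp_finsetSum hf m, eventually_all_finset _ |>.mpr hk] with ω h1 h2
  rw [h1, Finset.sum_apply]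
  exact Finset.sum_congr rfl h2

lemma dotProduct_transpose_mul_mulVec (A B : Matrix n n ℝ) (x : n → ℝ) :
    x ⬝ᵥ (Aᵀ * B) *ᵥ x = A *ᵥ x ⬝ᵥ B *ᵥ x := by
  rw [← mulVec_mulVec, dotProduct_mulVec, vecMul_transpose]

lemma integral_dotProduct_transpose_mul_mulVec_eq_zero [IsFiniteMeasure μ] (hm : m ≤ m0)
    (D : Matrix n n ℝ) {E : Ω → Matrix n n ℝ} (hE1 : ∀ a b, Integrable (fun ω => E ω a b) μ)
    (hEmean : ∀ a b, μ[fun ω => E ω a b | m] =ᵐ[μ] 0)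
    {x : Ω → n → ℝ} (hx : ∀ b, StronglyMeasurable[m] fun ω => x ω b)
    (hx2 : ∀ b, MemLp (fun ω => x ω b) 2 μ)
    (hint : Integrable (fun ω => x ω ⬝ᵥ (Dᵀ * E ω) *ᵥ x ω) μ) :
    ∫ ω, x ω ⬝ᵥ (Dᵀ * E ω) *ᵥ x ω ∂μ = 0 := by
  have hA : ∀ b b', Integrable (fun ω => (Dᵀ * E ω) b b') μ := fun b b' => by
    simp only [mul_apply, transpose_apply]
    exact integrable_finsetSum _ fun a _ => (hE1 a b').const_mul _
  have hAK : ∀ b b', μ[fun ω => (Dᵀ * E ω) b b' | m] =ᵐ[μ] fun _ => (0 : Matrix n n ℝ) b b' := by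
    intro b b'
    simp only [mul_apply, transpose_apply]
    refine (condExp_finsetSum_eq_const (k := fun _ => 0) (fun a _ => (hE1 a b').const_mul _)
      fun a _ => ?_).trans (by simp)
    rw [show (fun ω => D a b * E ω a b') = D a b • fun ω => E ω a b' from rfl]
    filter_upwards [condExp_smul (D a b) (fun ω => E ω a b') m, hEmean a b'] with ω h1 h2
    simp [h1, h2]
  simpa using integral_dotProduct_mulVec_eq_of_condExp_eq_const hm hA hAK hx hx2 hint

lemma integral_dotProduct_self_mulVec_add_le [IsFiniteMeasure μ] [DecidableEq n] (hm : m ≤ m0)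
    {D : Matrix n n ℝ} {c : ℝ} (hD : ‖toEuclideanCLM (𝕜 := ℝ) D‖ ≤ c)
    {E : Ω → Matrix n n ℝ} (hE2 : ∀ a b, MemLp (fun ω => E ω a b) 2 μ)
    (hEmean : ∀ a b, μ[fun ω => E ω a b | m] =ᵐ[μ] 0) {K : Matrix n n ℝ}
    (hEK : ∀ b b', μ[fun ω => ((E ω)ᵀ * E ω) b b' | m] =ᵐ[μ] fun _ => K b b')
    {β : ℝ} (hK : ∀ y, y ⬝ᵥ K *ᵥ y ≤ β * (y ⬝ᵥ y))
    {x : Ω → n → ℝ} (hx : ∀ b, StronglyMeasurable[m] fun ω => x ω b)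
    (hx2 : ∀ b, MemLp (fun ω => x ω b) 2 μ)
    (hx'2 : ∀ a, MemLp (fun ω => ((D + E ω) *ᵥ x ω) a) 2 μ) :
    ∫ ω, (D + E ω) *ᵥ x ω ⬝ᵥ (D + E ω) *ᵥ x ω ∂μ ≤ (c ^ 2 + β) * ∫ ω, x ω ⬝ᵥ x ω ∂μ := by
  have hDx2 := memLp_mulVec D hx2
  have hEx2 : ∀ a, MemLp (fun ω => (E ω *ᵥ x ω) a) 2 μ := fun a => by
    convert (hx'2 a).sub (hDx2 a) using 1
    ext ω
    simp [add_mulVec]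
  have hexpand : ∀ ω, (D + E ω) *ᵥ x ω ⬝ᵥ (D + E ω) *ᵥ x ω = D *ᵥ x ω ⬝ᵥ D *ᵥ x ω
      + 2 * (x ω ⬝ᵥ (Dᵀ * E ω) *ᵥ x ω) + x ω ⬝ᵥ ((E ω)ᵀ * E ω) *ᵥ x ω := by
    intro ω
    rw [dotProduct_transpose_mul_mulVec, dotProduct_transpose_mul_mulVec, add_mulVec,
      add_dotProduct, dotProduct_add, dotProduct_add, dotProduct_comm (E ω *ᵥ x ω)]
    ring
  have hDxInt := integrable_dotProduct_of_memLp hDx2 hDx2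
  have hcrossInt : Integrable (fun ω => x ω ⬝ᵥ (Dᵀ * E ω) *ᵥ x ω) μ := by
    simpa only [dotProduct_transpose_mul_mulVec] using integrable_dotProduct_of_memLp hDx2 hEx2
  have hquadInt : Integrable (fun ω => x ω ⬝ᵥ ((E ω)ᵀ * E ω) *ᵥ x ω) μ := by
    simpa only [dotProduct_transpose_mul_mulVec] using integrable_dotProduct_of_memLp hEx2 hEx2
  have hcross := integral_dotProduct_transpose_mul_mulVec_eq_zero hm D
    (fun a b => (hE2 a b).integrable one_le_two) hEmean hx hx2 hcrossInt
  have hquad : ∫ ω, x ω ⬝ᵥ ((E ω)ᵀ * E ω) *ᵥ x ω ∂μ ≤ β * ∫ ω, x ω ⬝ᵥ x ω ∂μ := by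
    have hA : ∀ b b', Integrable (fun ω => ((E ω)ᵀ * E ω) b b') μ := fun b b' => by
      simp only [mul_apply, transpose_apply]
      exact integrable_finsetSum _ fun a _ => (hE2 a b).integrable_mul (hE2 a b')
    rw [integral_dotProduct_mulVec_eq_of_condExp_eq_const hm hA hEK hx hx2 hquadInt,
      ← integral_const_mul]
    exact integral_mono (integrable_dotProduct_of_memLp hx2 (memLp_mulVec K hx2))
      ((integrable_dotProduct_of_memLp hx2 hx2).const_mul β) fun ω => hK (x ω)
  have hDD : ∫ ω, D *ᵥ x ω ⬝ᵥ D *ᵥ x ω ∂μ ≤ c ^ 2 * ∫ ω, x ω ⬝ᵥ x ω ∂μ := by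
    rw [← integral_const_mul]
    exact integral_mono hDxInt ((integrable_dotProduct_of_memLp hx2 hx2).const_mul _)
      fun ω => mulVec_dotProduct_mulVec_le hD (x ω)
  simp_rw [hexpand]
  rw [integral_add ?_ hquadInt,
    integral_add hDxInt (hcrossInt.const_mul 2), integral_const_mul, hcross]
  · linarith
  · exact hDxInt.add (hcrossInt.const_mul 2)

end Freezing

section Solution

variable {Ω : Type*} {m0 : MeasurableSpace Ω} {μ : Measure Ω} {ℱ : Filtration ℕ m0} {N : ℕ}
  {D : Matrix (Fin N) (Fin N) ℝ} {E : ℕ → Ω → Matrix (Fin N) (Fin N) ℝ} {X : ℕ → Ω → Fin N → ℝ}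

lemma secondMoment_eq_integral_dotProduct (j : ℕ) :
    secondMoment μ X j = ∫ ω, X j ω ⬝ᵥ X j ω ∂μ := by
  simp [secondMoment, dotProduct, sq]

lemma secondMoment_nonneg (j : ℕ) : 0 ≤ secondMoment μ X j :=
  integral_nonneg fun _ => Finset.sum_nonneg fun _ _ => sq_nonneg _

lemma IsSolution.stronglyMeasurable (hX : IsSolution μ ℱ D E X)
    (hE : ∀ j a b, StronglyMeasurable[ℱ (j + 1)] fun ω => E j ω a b) (j : ℕ) (b : Fin N) :
    StronglyMeasurable[ℱ j] fun ω => X j ω b := by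
  induction j generalizing b with
  | zero => exact hX.2.1 b
  | succ j ih =>
    simp only [hX.1 j, mulVec, dotProduct, Matrix.add_apply]
    exact Finset.stronglyMeasurable_fun_sum _ fun k _ =>
      (stronglyMeasurable_const.add (hE j b k)).mul ((ih k).mono (ℱ.mono j.le_succ))

lemma IsSolution.secondMoment_succ_le [IsFiniteMeasure μ] (hX : IsSolution μ ℱ D E X)
    (hEmeas : ∀ j a b, StronglyMeasurable[ℱ (j + 1)] fun ω => E j ω a b)
    (hE2 : ∀ j a b, MemLp (fun ω => E j ω a b) 2 μ)
    (hEmean : ∀ j a b, μ[fun ω => E j ω a b | ℱ j] =ᵐ[μ] 0) {K : Matrix (Fin N) (Fin N) ℝ}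
    (hEK : ∀ j b b', μ[fun ω => ((E j ω)ᵀ * E j ω) b b' | ℱ j] =ᵐ[μ] fun _ => K b b')
    {β : ℝ} (hK : ∀ y, y ⬝ᵥ K *ᵥ y ≤ β * (y ⬝ᵥ y)) {c : ℝ}
    (hD : ‖toEuclideanCLM (𝕜 := ℝ) D‖ ≤ c) (j : ℕ) :
    secondMoment μ X (j + 1) ≤ (c ^ 2 + β) * secondMoment μ X j := by
  have hX'2 : ∀ a, MemLp (fun ω => ((D + E j ω) *ᵥ X j ω) a) 2 μ := by
    simpa only [hX.1 j] using hX.2.2 (j + 1)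
  simp only [secondMoment_eq_integral_dotProduct, hX.1 j]
  exact integral_dotProduct_self_mulVec_add_le (ℱ.le j) hD (hE2 j) (hEmean j) (hEK j) hK
    (hX.stronglyMeasurable hEmeas j) (hX.2.2 j) hX'2

lemma asympMeanSquareStable_of_secondMoment_succ_le {α : ℝ} (hα0 : 0 ≤ α) (hα1 : α < 1)
    (h : ∀ X, IsSolution μ ℱ D E X → ∀ j, secondMoment μ X (j + 1) ≤ α * secondMoment μ X j) :
    AsympMeanSquareStable μ ℱ D E := by
  have hgeom : ∀ X, IsSolution μ ℱ D E X → ∀ j,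
      secondMoment μ X j ≤ α ^ j * secondMoment μ X 0 := by
    intro X hX j
    induction j with
    | zero => simp
    | succ j ih =>
      calc secondMoment μ X (j + 1) ≤ α * secondMoment μ X j := h X hX j
        _ ≤ α * (α ^ j * secondMoment μ X 0) := by gcongr
        _ = α ^ (j + 1) * secondMoment μ X 0 := by ring
  refine ⟨fun ε hε => ⟨ε, hε, fun X hX h0 j => ?_⟩, 1, one_pos, fun X hX _ => ?_⟩
  · calc secondMoment μ X j ≤ α ^ j * secondMoment μ X 0 := hgeom X hX j
      _ ≤ secondMoment μ X 0 :=
        mul_le_of_le_one_left (secondMoment_nonneg 0) (pow_le_one₀ hα0 hα1.le)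
      _ < ε := h0
  · refine squeeze_zero (fun j => secondMoment_nonneg j) (hgeom X hX) ?_
    simpa using (tendsto_pow_atTop_nhds_zero_of_lt_one hα0 hα1).mul_const (secondMoment μ X 0)

end Solution

section Noise

variable {U : Type*} [NormedAddCommGroup U] [InnerProductSpace ℝ U] {n : Type*} [Fintype n]

lemma LinearMap.exists_inner_eq_of_norm_le [CompleteSpace U] (φ : U →ₗ[ℝ] ℝ) {C : ℝ}
    (hφ : ∀ u, ‖φ u‖ ≤ C * ‖u‖) : ∃ v : U, ∀ u, φ u = ⟪u, v⟫ :=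
  ⟨(InnerProductSpace.toDual ℝ U).symm (φ.mkContinuous C hφ), fun u => by
    rw [real_inner_comm, InnerProductSpace.toDual_symm_apply]; rfl⟩

lemma condExp_transpose_mul_self_eq_const {Ω : Type*} {m m0 : MeasurableSpace Ω} {μ : Measure Ω}
    {L : Ω → U} (hL : MemLp L 2 μ) {G : U →ₗ[ℝ] Matrix n n ℝ} {v : n → n → U}
    (hv : ∀ u a b, G u a b = ⟪u, v a b⟫) {κ : U → U → ℝ}
    (hκ : ∀ u u', μ[fun ω => ⟪L ω, u⟫ * ⟪L ω, u'⟫ | m] =ᵐ[μ] fun _ => κ u u') (b b' : n) :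
    μ[fun ω => ((G (L ω))ᵀ * G (L ω)) b b' | m] =ᵐ[μ] fun _ => ∑ a, κ (v a b) (v a b') := by
  simp only [mul_apply, transpose_apply, hv]
  exact condExp_finsetSum_eq_const
    (fun a _ => (hL.inner_const (v a b)).integrable_mul (hL.inner_const (v a b'))) fun a _ => hκ _ _

lemma dotProduct_mulVec_covariance_le [DecidableEq n] {G : U →ₗ[ℝ] Matrix n n ℝ} {v : n → n → U}
    (hv : ∀ u a b, G u a b = ⟪u, v a b⟫) {gn : ℝ}
    (hG : ∀ u, ‖toEuclideanCLM (𝕜 := ℝ) (G u)‖ ≤ gn * ‖u‖) {f : ℕ → U} (hf : ∀ k, ‖f k‖ = 1)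
    {q : ℕ → ℝ} (hq : ∀ k, 0 ≤ q k) (hsum : Summable q) {t : ℝ} (ht : 0 ≤ t) (y : n → ℝ) :
    y ⬝ᵥ (of fun b b' => ∑ a, t * ∑' k, q k * (⟪f k, v a b⟫ * ⟪f k, v a b'⟫)) *ᵥ y
      ≤ t * (∑' k, q k) * gn ^ 2 * (y ⬝ᵥ y) := by
  have hgram : (of fun b b' => ∑ a, t * ∑' k, q k * (⟪f k, v a b⟫ * ⟪f k, v a b'⟫))
      = of fun b b' => ∑ a, ∑' k, (t * q k) * (G (f k) a b * G (f k) a b') := by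
    ext b b'
    simp only [of_apply, hv, ← tsum_mul_left, mul_assoc]
  rw [hgram, ← tsum_mul_left]
  exact dotProduct_mulVec_tsum_gram_le (fun k => mul_nonneg ht (hq k)) (hsum.mul_left t)
    (fun k => by simpa [hf k] using hG (f k)) y

end Noise

/-- In the orthonormal eigenbasis of `-A_h`, the drift `I + Δt A_h + Δt P_h F` of the scheme is
`diag (1 - Δt λ_{h,k}) + Δt Fm`, its noise `P_h G(·) ΔL^j` is `G (ΔL j)`, and `Tr Q = ∑ μ_k`. -/
theorem stmt10_general
    {Ω U : Type*} {m0 : MeasurableSpace Ω} (μ : Measure Ω) [IsProbabilityMeasure μ]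
    [NormedAddCommGroup U] [InnerProductSpace ℝ U] [CompleteSpace U]
    (ℱ : Filtration ℕ m0) (N : ℕ) (Δt : ℝ) (hΔt : 0 < Δt)
    (f : ℕ → U) (hf : Orthonormal ℝ f)
    (muQ : ℕ → ℝ) (hmu : ∀ k, 0 ≤ muQ k) (hsum : Summable muQ)
    (ΔL : ℕ → Ω → U)
    (hmeasL : ∀ j, StronglyMeasurable[ℱ (j + 1)] (ΔL j))
    (hL2L : ∀ j, MemLp (ΔL j) 2 μ)
    (hmean : ∀ j (u : U), μ[(fun ω => ⟪ΔL j ω, u⟫) | ℱ j] =ᵐ[μ] 0)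
    (hcondcov : ∀ j (u u' : U),
      μ[(fun ω => ⟪ΔL j ω, u⟫ * ⟪ΔL j ω, u'⟫) | ℱ j]
        =ᵐ[μ] fun _ => ∫ ω, ⟪ΔL j ω, u⟫ * ⟪ΔL j ω, u'⟫ ∂μ)
    (hcov : ∀ j (u u' : U), ∫ ω, ⟪ΔL j ω, u⟫ * ⟪ΔL j ω, u'⟫ ∂μ
      = Δt * ∑' k, muQ k * (⟪f k, u⟫ * ⟪f k, u'⟫))
    -- eigenvalues of `-A_h`, non-decreasing, smallest `lamh 0`, largest `lamh (Fin.last N)`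
    (lamh : Fin (N + 1) → ℝ) (hlammono : Monotone lamh)
    (Fm : Matrix (Fin (N + 1)) (Fin (N + 1)) ℝ) (nF : ℝ)
    (hFm : ‖Matrix.toEuclideanCLM (𝕜 := ℝ) Fm‖ ≤ nF)
    (G : U →ₗ[ℝ] Matrix (Fin (N + 1)) (Fin (N + 1)) ℝ) (gn : ℝ)
    (hG : ∀ u : U, ‖Matrix.toEuclideanCLM (𝕜 := ℝ) (G u)‖ ≤ gn * ‖u‖)
    (hcond : (max |1 - Δt * lamh 0| |1 - Δt * lamh (Fin.last N)| + Δt * nF) ^ 2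
        + Δt * (∑' k, muQ k) * gn ^ 2 < 1) :
    AsympMeanSquareStable μ ℱ
      (Matrix.diagonal (fun k => 1 - Δt * lamh k) + Δt • Fm)
      (fun j ω => G (ΔL j ω)) := by
  obtain ⟨v, hv⟩ : ∃ v : Fin (N + 1) → Fin (N + 1) → U, ∀ u a b, G u a b = ⟪u, v a b⟫ := by
    choose v hv using fun a b => ((entryLinearMap ℝ ℝ a b).comp G).exists_inner_eq_of_norm_le
      fun u => (Real.norm_eq_abs _).trans_le
        ((abs_apply_le_norm_toEuclideanCLM (G u) a b).trans (hG u))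
    exact ⟨v, fun u a b => hv a b u⟩
  have hentry : ∀ j a b, (fun ω => G (ΔL j ω) a b) = fun ω => ⟪ΔL j ω, v a b⟫ :=
    fun j a b => funext fun ω => hv _ a b
  have hβ0 : 0 ≤ Δt * (∑' k, muQ k) * gn ^ 2 :=
    mul_nonneg (mul_nonneg hΔt.le (tsum_nonneg hmu)) (sq_nonneg _)
  refine asympMeanSquareStable_of_secondMoment_succ_le (add_nonneg (sq_nonneg _) hβ0) hcond
    fun X hX j =>
    hX.secondMoment_succ_le ?_ ?_ ?_
      (K := of fun b b' => ∑ a, Δt * ∑' k, muQ k * (⟪f k, v a b⟫ * ⟪f k, v a b'⟫))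
      (fun j => condExp_transpose_mul_self_eq_const (hL2L j) hv
        (κ := fun u u' => Δt * ∑' k, muQ k * (⟪f k, u⟫ * ⟪f k, u'⟫)) fun u u' =>
        (hcondcov j u u').trans (by rw [hcov]))
      (dotProduct_mulVec_covariance_le hv hG hf.1 hmu hsum hΔt.le)
      (norm_toEuclideanCLM_forwardEuler_le hΔt.le hlammono hFm) j
  all_goals intro j a b; rw [hentry]
  exacts [(hmeasL j).inner stronglyMeasurable_const, (hL2L j).inner_const _, hmean j _]

/-- **Theorem 3.4(3), forward Euler.** For `R(z) = 1 + z`, the Galerkin forward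
Euler–Maruyama scheme, written in the orthonormal eigenbasis of `-A_h` (eigenvalues
`0 < λ_{h,1} ≤ … ≤ λ_{h,N_h}`, monotone): deterministic part
`D = (I + Δt A_h) + Δt P_h F = diag(1 - Δt λ_{h,k}) + Δt Fm` with `‖Fm‖ ≤ ‖F‖_{L(H)}`,
stochastic part `E^j = P_h G(·)ΔL^j = G(ΔL^j)` with `‖G(u)‖ ≤ ‖G‖‖u‖`, driven by Lévy
increments with covariance `Δt Σ_k μ_k f_k ⊗ f_k`, `Tr(Q) = Σ_k μ_k`. It is asymptotically
mean-square stable if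
`(max{|1 - Δt λ_{h,1}|, |1 - Δt λ_{h,N_h}|} + Δt ‖F‖)² + Δt Tr(Q) ‖G‖² < 1`. -/
theorem stmt10
    {Ω U : Type*} {m0 : MeasurableSpace Ω} (μ : Measure Ω) [IsProbabilityMeasure μ]
    [NormedAddCommGroup U] [InnerProductSpace ℝ U] [CompleteSpace U]
    (ℱ : Filtration ℕ m0) (N : ℕ) (Δt : ℝ) (hΔt : 0 < Δt)
    (f : ℕ → U) (hf : Orthonormal ℝ f)
    (muQ : ℕ → ℝ) (hmu : ∀ k, 0 ≤ muQ k) (hsum : Summable muQ)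
    (ΔL : ℕ → Ω → U)
    (hmeasL : ∀ j, StronglyMeasurable[ℱ (j + 1)] (ΔL j))
    (hL2L : ∀ j, MemLp (ΔL j) 2 μ)
    (hmean : ∀ j (u : U), μ[(fun ω => ⟪ΔL j ω, u⟫) | ℱ j] =ᵐ[μ] 0)
    (hcondcov : ∀ j (u u' : U),
      μ[(fun ω => ⟪ΔL j ω, u⟫ * ⟪ΔL j ω, u'⟫) | ℱ j]
        =ᵐ[μ] fun _ => ∫ ω, ⟪ΔL j ω, u⟫ * ⟪ΔL j ω, u'⟫ ∂μ)
    (hcov : ∀ j (u u' : U), ∫ ω, ⟪ΔL j ω, u⟫ * ⟪ΔL j ω, u'⟫ ∂μ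
      = Δt * ∑' k, muQ k * (⟪f k, u⟫ * ⟪f k, u'⟫))
    (hspan : ∀ j ω, ΔL j ω ∈ (Submodule.span ℝ (Set.range f)).topologicalClosure)
    -- eigenvalues of `-A_h`, non-decreasing, smallest `lamh 0`, largest `lamh (Fin.last N)`
    (lamh : Fin (N + 1) → ℝ) (hlampos : ∀ k, 0 < lamh k) (hlammono : Monotone lamh)
    (Fm : Matrix (Fin (N + 1)) (Fin (N + 1)) ℝ) (nF : ℝ) (hnF0 : 0 ≤ nF)
    (hFm : ‖Matrix.toEuclideanCLM (𝕜 := ℝ) Fm‖ ≤ nF)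
    (G : U →ₗ[ℝ] Matrix (Fin (N + 1)) (Fin (N + 1)) ℝ) (gn : ℝ) (hgn0 : 0 ≤ gn)
    (hG : ∀ u : U, ‖Matrix.toEuclideanCLM (𝕜 := ℝ) (G u)‖ ≤ gn * ‖u‖)
    (hcond : (max |1 - Δt * lamh 0| |1 - Δt * lamh (Fin.last N)| + Δt * nF) ^ 2
        + Δt * (∑' k, muQ k) * gn ^ 2 < 1) :
    AsympMeanSquareStable μ ℱ
      (Matrix.diagonal (fun k => 1 - Δt * lamh k) + Δt • Fm)
      (fun j ω => G (ΔL j ω)) :=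
  stmt10_general μ ℱ N Δt hΔt f hf muQ hmu hsum ΔL hmeasL hL2L hmean hcondcov hcov lamh hlammono Fm
    nF hFm G gn hG hcond

end
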